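/- arXiv:2002.05135 — 2 statements merged into one kernel-verified Lean document; each statement's English description precedes it below -/
import Mathlib

section
/- Under the assumptions 0 ≤ r(s,a) ≤ R, ‖∇_θ log π(a|s;θ)‖ ≤ G, and ‖∇_θ² log π(a|s;θ)‖ ≤ L, the matrix u(τ;θ) := ∇_θ ν(τ;θ) ∇_θ log q(τ;θ)^⊤ + ∇_θ² ν(τ;θ), where ν(τ;θ) = Σ_{h=0}^H log π(a_h|s_h;θ) R^h(τ) and ∇_θ log q(τ;θ) = Σ_{h=0}^H ∇_θ log π(a_h|s_h;θ), satisfies ‖u(τ;θ)‖ ≤ ((H+1)G² + L)R/(1−γ)². -/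
open Finset in
private lemma geom_aux {γ : ℝ} (hγ0 : 0 ≤ γ) (hγ1 : γ < 1) (n : ℕ) :
    ∑ i ∈ range n, γ ^ i ≤ 1 / (1 - γ) := by
  rw [Finset.range_eq_Ico]
  simpa using geom_sum_Ico_le_of_lt_one hγ0 hγ1 (m := 0) (n := n)

open Finset in
/-- Bound on the per-trajectory Hessian estimator
`u(τ;θ) = g(τ;θ) (Σ_h ∇log π_h)ᵀ + Σ_h R^h(τ) ∇²log π_h`:
`‖u(τ;θ)‖ ≤ ((H+1)G² + L)R/(1−γ)²`. -/
theorem stmt_5 {d : ℕ} {Θ : Type*}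
    (H : ℕ) (r : ℕ → ℝ) (R γ G L : ℝ)
    (score : Θ → ℕ → EuclideanSpace ℝ (Fin d))
    (hess : Θ → ℕ → (EuclideanSpace ℝ (Fin d) →L[ℝ] EuclideanSpace ℝ (Fin d)))
    (hr : ∀ t, 0 ≤ r t ∧ r t ≤ R)
    (hγ0 : 0 ≤ γ) (hγ1 : γ < 1)
    (hG : ∀ θ h, ‖score θ h‖ ≤ G)
    (hL : ∀ θ h, ‖hess θ h‖ ≤ L) :
    ∀ θ : Θ,
      ‖((innerSL ℝ (∑ h ∈ range (H + 1), score θ h)).smulRight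
            (∑ h ∈ range (H + 1), (∑ t ∈ Icc h H, γ ^ t * r t) • score θ h))
          + ∑ h ∈ range (H + 1), (∑ t ∈ Icc h H, γ ^ t * r t) • hess θ h‖
        ≤ (((H : ℝ) + 1) * G ^ 2 + L) * R / (1 - γ) ^ 2 := by
  intro θ
  have h1 : 0 < 1 - γ := by linarith
  have hR : 0 ≤ R := le_trans (hr 0).1 (hr 0).2
  have hG0 : 0 ≤ G := le_trans (norm_nonneg _) (hG θ 0)
  have hL0 : 0 ≤ L := le_trans (norm_nonneg _) (hL θ 0)
  set S : ℕ → ℝ := fun h => ∑ t ∈ Icc h H, γ ^ t * r t with hSdef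
  have hSnn : ∀ h, 0 ≤ S h := fun h =>
    Finset.sum_nonneg fun t _ => mul_nonneg (pow_nonneg hγ0 t) (hr t).1
  have hSb : ∀ h, S h ≤ γ ^ h * (R / (1 - γ)) := by
    intro h
    calc S h ≤ ∑ t ∈ Icc h H, γ ^ t * R :=
          Finset.sum_le_sum fun t _ =>
            mul_le_mul_of_nonneg_left (hr t).2 (pow_nonneg hγ0 t)
      _ = (∑ t ∈ Ico h (H + 1), γ ^ t) * R := by
          rw [Finset.sum_mul, Finset.Ico_add_one_right_eq_Icc]
      _ ≤ (γ ^ h / (1 - γ)) * R :=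
          mul_le_mul_of_nonneg_right (geom_sum_Ico_le_of_lt_one hγ0 hγ1) hR
      _ = γ ^ h * (R / (1 - γ)) := by ring
  have hK : ∑ h ∈ range (H + 1), S h ≤ R / (1 - γ) ^ 2 := by
    calc ∑ h ∈ range (H + 1), S h
        ≤ ∑ h ∈ range (H + 1), γ ^ h * (R / (1 - γ)) :=
          Finset.sum_le_sum fun h _ => hSb h
      _ = (∑ h ∈ range (H + 1), γ ^ h) * (R / (1 - γ)) := by
          rw [Finset.sum_mul]
      _ ≤ (1 / (1 - γ)) * (R / (1 - γ)) := by
          apply mul_le_mul_of_nonneg_right (geom_aux hγ0 hγ1 _)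
          positivity
      _ = R / (1 - γ) ^ 2 := by
          rw [div_mul_div_comm, one_mul, sq]
  set K : ℝ := ∑ h ∈ range (H + 1), S h with hKdef
  have hKnn : 0 ≤ K := Finset.sum_nonneg fun h _ => hSnn h
  have hv : ‖∑ h ∈ range (H + 1), score θ h‖ ≤ ((H : ℝ) + 1) * G := by
    calc ‖∑ h ∈ range (H + 1), score θ h‖
        ≤ ∑ h ∈ range (H + 1), ‖score θ h‖ := norm_sum_le _ _
      _ ≤ ∑ h ∈ range (H + 1), G := Finset.sum_le_sum fun h _ => hG θ h
      _ = ((H : ℝ) + 1) * G := by simp [mul_comm]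
  have hw : ‖∑ h ∈ range (H + 1), S h • score θ h‖ ≤ K * G := by
    calc ‖∑ h ∈ range (H + 1), S h • score θ h‖
        ≤ ∑ h ∈ range (H + 1), ‖S h • score θ h‖ := norm_sum_le _ _
      _ ≤ ∑ h ∈ range (H + 1), S h * G := by
          apply Finset.sum_le_sum
          intro h _
          rw [norm_smul, Real.norm_eq_abs, abs_of_nonneg (hSnn h)]
          exact mul_le_mul_of_nonneg_left (hG θ h) (hSnn h)
      _ = K * G := by rw [hKdef, Finset.sum_mul]
  have hhess : ‖∑ h ∈ range (H + 1), S h • hess θ h‖ ≤ K * L := by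
    calc ‖∑ h ∈ range (H + 1), S h • hess θ h‖
        ≤ ∑ h ∈ range (H + 1), ‖S h • hess θ h‖ := norm_sum_le _ _
      _ ≤ ∑ h ∈ range (H + 1), S h * L := by
          apply Finset.sum_le_sum
          intro h _
          calc ‖S h • hess θ h‖ ≤ ‖S h‖ * ‖hess θ h‖ :=
                ContinuousLinearMap.opNorm_smul_le _ _
            _ ≤ S h * L := by
                rw [Real.norm_eq_abs, abs_of_nonneg (hSnn h)]
                exact mul_le_mul_of_nonneg_left (hL θ h) (hSnn h)
      _ = K * L := by rw [hKdef, Finset.sum_mul]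
  have hfirst : ‖(innerSL ℝ (∑ h ∈ range (H + 1), score θ h)).smulRight
      (∑ h ∈ range (H + 1), S h • score θ h)‖ ≤ (((H : ℝ) + 1) * G) * (K * G) := by
    rw [ContinuousLinearMap.norm_smulRight_apply, innerSL_apply_norm]
    exact mul_le_mul hv hw (norm_nonneg _) (by positivity)
  calc ‖_ + _‖ ≤ (((H : ℝ) + 1) * G) * (K * G) + K * L :=
        le_trans (norm_add_le _ _) (add_le_add hfirst hhess)
    _ = (((H : ℝ) + 1) * G ^ 2 + L) * K := by ring
    _ ≤ (((H : ℝ) + 1) * G ^ 2 + L) * (R / (1 - γ) ^ 2) := by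
        apply mul_le_mul_of_nonneg_left hK
        positivity
    _ = (((H : ℝ) + 1) * G ^ 2 + L) * R / (1 - γ) ^ 2 := by ring
end

section
/- Suppose ‖∇_θ² log π(a|s;θ_1) − ∇_θ² log π(a|s;θ_2)‖ ≤ ρ‖θ_1−θ_2‖, ‖∇_θ log π(a|s;θ)‖ ≤ G, ‖∇_θ² log π(a|s;θ)‖ ≤ L, and 0 ≤ r ≤ R with 0 ≤ γ < 1. Then for any fixed trajectory τ, the map θ ↦ u(τ;θ) (defined as in the policy Hessian estimator) is Lipschitz with constant η_ρ := (2(H+1)GL + ρ)R/(1−γ)². -/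
/-!
Write `u(θ) = ⟨S θ, ·⟩ • V θ + M θ` with `S = ∑ₕ ∇log π`, `V = ∑ₕ Rʰ ∇log π` and
`M = ∑ₕ Rʰ ∇² log π`. The product rule for differences,
`‖S V − S' V'‖ ≤ ‖S‖ ‖V − V'‖ + ‖S − S'‖ ‖V'‖`, reduces the claim to bounds on the three sums:
`∇log π` is bounded by `G` and `L`-Lipschitz (by the Hessian bound), `∇² log π` is
`ρ`-Lipschitz, and the discounted returns satisfy `Rʰ ≤ γʰ R / (1 − γ)`, so that
`∑ₕ Rʰ ≤ R / (1 − γ)²`.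
-/

open Finset

theorem sum_range_sum_Icc_pow_mul_le {r : ℕ → ℝ} {R γ : ℝ} (n H : ℕ)
    (hγ0 : 0 ≤ γ) (hγ1 : γ < 1) (hR : 0 ≤ R) (hrR : ∀ t, r t ≤ R) :
    ∑ h ∈ range n, ∑ t ∈ Icc h H, γ ^ t * r t ≤ R / (1 - γ) ^ 2 := by
  have hreturn (h : ℕ) : ∑ t ∈ Icc h H, γ ^ t * r t ≤ R / (1 - γ) * γ ^ h :=
    calc ∑ t ∈ Icc h H, γ ^ t * r t ≤ R * ∑ t ∈ Ico h (H + 1), γ ^ t := by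
          rw [Ico_add_one_right_eq_Icc, mul_sum]
          exact sum_le_sum fun t _ => by
            rw [mul_comm]; exact mul_le_mul_of_nonneg_right (hrR t) (pow_nonneg hγ0 t)
      _ ≤ R * (γ ^ h / (1 - γ)) :=
          mul_le_mul_of_nonneg_left (geom_sum_Ico_le_of_lt_one hγ0 hγ1) hR
      _ = R / (1 - γ) * γ ^ h := by ring
  calc ∑ h ∈ range n, ∑ t ∈ Icc h H, γ ^ t * r t
      ≤ R / (1 - γ) * ∑ h ∈ Ico 0 n, γ ^ h := by
        rw [← range_eq_Ico, mul_sum]; exact sum_le_sum fun h _ => hreturn h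
    _ ≤ R / (1 - γ) * (γ ^ 0 / (1 - γ)) :=
        mul_le_mul_of_nonneg_left (geom_sum_Ico_le_of_lt_one hγ0 hγ1)
          (div_nonneg hR (sub_nonneg.2 hγ1.le))
    _ = R / (1 - γ) ^ 2 := by rw [pow_zero, div_mul_div_comm, mul_one, sq]

section WeightedSums

variable {ι E : Type*} [SeminormedAddCommGroup E] {s : Finset ι} {K : ℝ}

theorem norm_sum_le_card_mul {f : ι → E} (hf : ∀ i ∈ s, ‖f i‖ ≤ K) :
    ‖∑ i ∈ s, f i‖ ≤ #s * K := by
  simpa using norm_sum_le_of_le s hf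

variable [NormedSpace ℝ E] {c : ι → ℝ}

theorem norm_sum_smul_le_of_nonneg (hc : ∀ i ∈ s, 0 ≤ c i) {f : ι → E}
    (hf : ∀ i ∈ s, ‖f i‖ ≤ K) : ‖∑ i ∈ s, c i • f i‖ ≤ (∑ i ∈ s, c i) * K := by
  rw [sum_mul]
  refine norm_sum_le_of_le s fun i hi => ?_
  rw [norm_smul, Real.norm_of_nonneg (hc i hi)]
  exact mul_le_mul_of_nonneg_left (hf i hi) (hc i hi)

theorem norm_sum_smul_sub_sum_smul_le (hc : ∀ i ∈ s, 0 ≤ c i) {f g : ι → E}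
    (hfg : ∀ i ∈ s, ‖f i - g i‖ ≤ K) :
    ‖∑ i ∈ s, c i • f i - ∑ i ∈ s, c i • g i‖ ≤ (∑ i ∈ s, c i) * K := by
  simpa only [← sum_sub_distrib, ← smul_sub] using norm_sum_smul_le_of_nonneg hc hfg

end WeightedSums

section HessianEstimator

variable {ι E : Type*} [NormedAddCommGroup E] [InnerProductSpace ℝ E]

theorem norm_innerSL_smulRight_sub_le (S S' V V' : E) :
    ‖(innerSL ℝ S).smulRight V - (innerSL ℝ S').smulRight V'‖
      ≤ ‖S‖ * ‖V - V'‖ + ‖S - S'‖ * ‖V'‖ := by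
  have hsplit : (innerSL ℝ S).smulRight V - (innerSL ℝ S').smulRight V'
      = (innerSL ℝ S).smulRight (V - V') + (innerSL ℝ (S - S')).smulRight V' := by
    ext x
    simp only [sub_apply, add_apply,
      ContinuousLinearMap.smulRight_apply, innerSL_apply_apply, inner_sub_left, smul_sub,
      sub_smul]
    abel
  rw [hsplit]
  refine (norm_add_le _ _).trans_eq ?_
  simp only [ContinuousLinearMap.norm_smulRight_apply, innerSL_apply_norm]

/-- `u(τ; θ)` with scores `g i = ∇ log π(aᵢ|sᵢ; θ)`, their derivatives `Dg i` and weights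
`w i = Rⁱ(τ)`. -/
noncomputable def hessianEstimator (s : Finset ι) (w : ι → ℝ) (g : ι → E)
    (Dg : ι → E →L[ℝ] E) : E →L[ℝ] E :=
  (innerSL ℝ (∑ i ∈ s, g i)).smulRight (∑ i ∈ s, w i • g i) + ∑ i ∈ s, w i • Dg i

theorem norm_hessianEstimator_sub_le {s : Finset ι} {w : ι → ℝ} {g g' : ι → E}
    {Dg Dg' : ι → E →L[ℝ] E} {G a b : ℝ} (hw : ∀ i ∈ s, 0 ≤ w i)
    (hg : ∀ i ∈ s, ‖g i‖ ≤ G) (hg' : ∀ i ∈ s, ‖g' i‖ ≤ G)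
    (hgg' : ∀ i ∈ s, ‖g i - g' i‖ ≤ a) (hDg : ∀ i ∈ s, ‖Dg i - Dg' i‖ ≤ b) :
    ‖hessianEstimator s w g Dg - hessianEstimator s w g' Dg'‖
      ≤ (2 * #s * G * a + b) * ∑ i ∈ s, w i := by
  have hS := norm_sum_le_card_mul hg
  have hSdiff : ‖∑ i ∈ s, g i - ∑ i ∈ s, g' i‖ ≤ #s * a := by
    rw [← sum_sub_distrib]; exact norm_sum_le_card_mul hgg'
  have hV' := norm_sum_smul_le_of_nonneg hw hg'
  have hVdiff := norm_sum_smul_sub_sum_smul_le hw hgg'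
  have hMdiff := norm_sum_smul_sub_sum_smul_le hw hDg
  unfold hessianEstimator
  rw [add_sub_add_comm]
  calc _ ≤ _ := norm_add_le_of_le (norm_innerSL_smulRight_sub_le _ _ _ _) hMdiff
    _ ≤ (#s * G) * ((∑ i ∈ s, w i) * a) + (#s * a) * ((∑ i ∈ s, w i) * G)
          + (∑ i ∈ s, w i) * b := by
        gcongr ?_ + ?_ + _
        · exact mul_le_mul hS hVdiff (norm_nonneg _) ((norm_nonneg _).trans hS)
        · exact mul_le_mul hSdiff hV' (norm_nonneg _) ((norm_nonneg _).trans hSdiff)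
    _ = (2 * #s * G * a + b) * ∑ i ∈ s, w i := by ring

end HessianEstimator

open Finset in
/-- Lipschitz property of the per-trajectory Hessian estimator `u(τ;·)` with
constant `η_ρ = (2(H+1)GL + ρ)R/(1−γ)²`, where `score θ h = ∇_θ log π(a_h|s_h;θ)`
is bounded by `G`, its derivative (the per-step Hessian) is bounded by `L` and
`ρ`-Lipschitz, and rewards lie in `[0,R]`. -/
theorem stmt_7 {d : ℕ}
    (H : ℕ) (r : ℕ → ℝ) (R γ G L ρ : ℝ)
    (score : EuclideanSpace ℝ (Fin d) → ℕ → EuclideanSpace ℝ (Fin d))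
    (hr : ∀ t, 0 ≤ r t ∧ r t ≤ R)
    (hγ0 : 0 ≤ γ) (hγ1 : γ < 1)
    (hdiff : ∀ h, Differentiable ℝ (fun θ => score θ h))
    (hG : ∀ θ h, ‖score θ h‖ ≤ G)
    (hL : ∀ θ h, ‖fderiv ℝ (fun θ' => score θ' h) θ‖ ≤ L)
    (hρ : ∀ θ θ' h, ‖fderiv ℝ (fun θ'' => score θ'' h) θ
            - fderiv ℝ (fun θ'' => score θ'' h) θ'‖ ≤ ρ * ‖θ - θ'‖) :
    ∀ θ θ' : EuclideanSpace ℝ (Fin d),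
      ‖(((innerSL ℝ (∑ h ∈ range (H + 1), score θ h)).smulRight
            (∑ h ∈ range (H + 1), (∑ t ∈ Icc h H, γ ^ t * r t) • score θ h))
          + ∑ h ∈ range (H + 1),
              (∑ t ∈ Icc h H, γ ^ t * r t) • fderiv ℝ (fun θ'' => score θ'' h) θ)
        - (((innerSL ℝ (∑ h ∈ range (H + 1), score θ' h)).smulRight
            (∑ h ∈ range (H + 1), (∑ t ∈ Icc h H, γ ^ t * r t) • score θ' h))
          + ∑ h ∈ range (H + 1),
              (∑ t ∈ Icc h H, γ ^ t * r t) • fderiv ℝ (fun θ'' => score θ'' h) θ')‖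
      ≤ (2 * ((H : ℝ) + 1) * G * L + ρ) * R / (1 - γ) ^ 2 * ‖θ - θ'‖ := by
  intro θ θ'
  have hR : 0 ≤ R := (hr 0).1.trans (hr 0).2
  have hLip (h : ℕ) : ‖score θ h - score θ' h‖ ≤ L * ‖θ - θ'‖ :=
    convex_univ.norm_image_sub_le_of_norm_fderiv_le (fun z _ => hdiff h z)
      (fun z _ => hL z h) (Set.mem_univ θ') (Set.mem_univ θ)
  have hestimate := norm_hessianEstimator_sub_le (s := range (H + 1))
    (w := fun h => ∑ t ∈ Icc h H, γ ^ t * r t)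
    (fun h _ => sum_nonneg fun t _ => mul_nonneg (pow_nonneg hγ0 t) (hr t).1)
    (fun h _ => hG θ h) (fun h _ => hG θ' h) (fun h _ => hLip h) (fun h _ => hρ θ θ' h)
  have hweights := sum_range_sum_Icc_pow_mul_le (H + 1) H hγ0 hγ1 hR fun t => (hr t).2
  have hcoeff : 0 ≤ 2 * ((H : ℝ) + 1) * G * (L * ‖θ - θ'‖) + ρ * ‖θ - θ'‖ := by
    have hG0 := (norm_nonneg _).trans (hG θ 0)
    have hL0 := (norm_nonneg _).trans (hL θ 0)
    have hρ0 := (norm_nonneg _).trans (hρ θ θ' 0)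
    positivity
  rw [card_range, Nat.cast_add_one] at hestimate
  calc _ ≤ _ := hestimate
    _ ≤ (2 * ((H : ℝ) + 1) * G * (L * ‖θ - θ'‖) + ρ * ‖θ - θ'‖) * (R / (1 - γ) ^ 2) :=
        mul_le_mul_of_nonneg_left hweights hcoeff
    _ = _ := by ring
end
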